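/- arXiv:2404.10216 — 2 statements merged into one kernel-verified Lean document; each statement's English description precedes it below -/
import Mathlib

section
/- Let D = (E, F) be a proper set system, a, b ∈ E distinct, and A ⊆ E with |A ∩ {a,b}| equal to 0 or 2, and assume D̃_ab is proper. Then the twists of D and of the handle-slid set system D̃_ab by A have equal widths: w(D * A) = w(D̃_ab * A). -/
/-! Every set that handle sliding toggles has the form `F ∪ {a}` with `F ∪ {b}` feasible and
`a, b ∉ F`. When `A` contains both or neither of `a, b`, the transposition `(a b)` fixes `A` and
carries `F ∪ {a}` to `F ∪ {b}`, so `|A ∆ (F ∪ {a})| = |A ∆ (F ∪ {b})|`. Each set toggled in is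
therefore matched by a feasible set of `D` with the same twisted size, so both twists realise the
same set of sizes, and the width only depends on that set. -/

open scoped symmDiff

namespace SetSystem

variable {α : Type*} [DecidableEq α]

/-- The family `{F ∪ {a} : F ∪ {b} ∈ 𝓕 and F ⊆ E \ {a,b}}` used in handle sliding. -/
def slideSet (E : Finset α) (a b : α) (𝓕 : Finset (Finset α)) : Finset (Finset α) :=
  ((E \ {a, b}).powerset.filter (fun X => insert b X ∈ 𝓕)).image (fun X => insert a X)

/-- Handle sliding of `a` over `b`: `𝓕 ∆ {F ∪ {a} : F ∪ {b} ∈ 𝓕, F ⊆ E \ {a,b}}`. -/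
def handleSlide (E : Finset α) (a b : α) (𝓕 : Finset (Finset α)) : Finset (Finset α) :=
  𝓕 ∆ slideSet E a b 𝓕

/-- The family `{F ∪ {a,b} : F ∈ 𝓕 and F ⊆ E \ {a,b}}` used in exchanging handle ends. -/
def exchSet (E : Finset α) (a b : α) (𝓕 : Finset (Finset α)) : Finset (Finset α) :=
  ((E \ {a, b}).powerset.filter (fun X => X ∈ 𝓕)).image (fun X => insert a (insert b X))

/-- Exchanging handle ends of `a` and `b`: `𝓕 ∆ {F ∪ {a,b} : F ∈ 𝓕, F ⊆ E \ {a,b}}`. -/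
def exchEnds (E : Finset α) (a b : α) (𝓕 : Finset (Finset α)) : Finset (Finset α) :=
  𝓕 ∆ exchSet E a b 𝓕

/-- The twist of a set system by `A`: feasible sets become `A ∆ X` for `X` feasible. -/
def twist (A : Finset α) (𝓕 : Finset (Finset α)) : Finset (Finset α) :=
  𝓕.image (fun X => A ∆ X)

/-- `r(D_max)`: size of a largest feasible set. -/
def rmax (𝓕 : Finset (Finset α)) : ℕ := 𝓕.sup Finset.card

/-- `r(D_min)`: size of a smallest feasible set (0 for the empty family). -/
def rmin (𝓕 : Finset (Finset α)) : ℕ := WithTop.untopD 0 ((𝓕.image Finset.card).min)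

/-- The width `w(D) = r(D_max) - r(D_min)`. -/
def width (𝓕 : Finset (Finset α)) : ℕ := rmax 𝓕 - rmin 𝓕

/-- The twist polynomial `∂ω_D(z) = Σ_{A ⊆ E} z^{w(D*A)}`. -/
noncomputable def twistPoly (E : Finset α) (𝓕 : Finset (Finset α)) : Polynomial ℤ :=
  ∑ A ∈ E.powerset, Polynomial.X ^ width (twist A 𝓕)

/-- A (proper) delta-matroid: a nonempty family satisfying the symmetric exchange axiom. -/
def IsDeltaMatroid (𝓕 : Finset (Finset α)) : Prop :=
  𝓕.Nonempty ∧ ∀ X ∈ 𝓕, ∀ Y ∈ 𝓕, ∀ u ∈ X ∆ Y, ∃ v ∈ X ∆ Y, X ∆ ({u, v} : Finset α) ∈ 𝓕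

/-- A set system on ground set `E` is binary if some twist of it equals `D(C)` for a
symmetric matrix `C` over `GF(2)` indexed by `E`: the feasible sets of `D(C)` are those
`B ⊆ E` whose principal submatrix `C[B]` is nonsingular (with `C[∅]` nonsingular). -/
def IsBinary (E : Finset α) (𝓕 : Finset (Finset α)) : Prop :=
  ∃ A ⊆ E, ∃ C : α → α → ZMod 2, (∀ i j, C i j = C j i) ∧
    ∀ B : Finset α, B ∈ twist A 𝓕 ↔
      B ⊆ E ∧ (Matrix.of fun i j : ↥B => C i.1 j.1).det ≠ 0

/-- `e` is a loop: it lies in no feasible set. -/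
def IsLoop (𝓕 : Finset (Finset α)) (e : α) : Prop := ∀ X ∈ 𝓕, e ∉ X

/-- `e` is a coloop: it lies in every feasible set. -/
def IsColoop (𝓕 : Finset (Finset α)) (e : α) : Prop := ∀ X ∈ 𝓕, e ∈ X

/-- Deletion of `e` (acting on the feasible family). -/
def deleteElem (𝓕 : Finset (Finset α)) (e : α) : Finset (Finset α) :=
  if ∀ X ∈ 𝓕, e ∈ X then 𝓕.image (fun X => X.erase e)
  else 𝓕.filter (fun X => e ∉ X)

/-- Contraction of `e`: `D / e = (D * {e}) \ e`. -/
def contractElem (𝓕 : Finset (Finset α)) (e : α) : Finset (Finset α) :=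
  deleteElem (twist {e} 𝓕) e

open Finset

theorem _root_.Finset.image_symmDiff_eq_of_forall_exists {β γ : Type*} [DecidableEq β]
    [DecidableEq γ] (f : β → γ) {s t : Finset β} (h : ∀ x ∈ t, ∃ y ∈ s \ t, f y = f x) :
    (s ∆ t).image f = s.image f := by
  ext z
  simp only [mem_image, mem_symmDiff]
  constructor
  · rintro ⟨x, ⟨hxs, -⟩ | ⟨hxt, -⟩, rfl⟩
    · exact ⟨x, hxs, rfl⟩
    · obtain ⟨y, hy, hyx⟩ := h x hxt
      exact ⟨y, (mem_sdiff.1 hy).1, hyx⟩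
  · rintro ⟨x, hxs, rfl⟩
    by_cases hxt : x ∈ t
    · obtain ⟨y, hy, hyx⟩ := h x hxt
      exact ⟨y, Or.inl (mem_sdiff.1 hy), hyx⟩
    · exact ⟨x, Or.inl ⟨hxs, hxt⟩, rfl⟩

omit [DecidableEq α] in
theorem width_eq_of_image_card_eq {𝓕 𝓖 : Finset (Finset α)}
    (h : 𝓕.image card = 𝓖.image card) : width 𝓕 = width 𝓖 := by
  have hrmax : ∀ 𝓗 : Finset (Finset α), rmax 𝓗 = (𝓗.image card).sup id := fun 𝓗 =>
    (sup_image 𝓗 card id).symm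
  rw [width, width, hrmax, hrmax, rmin, rmin, h]

theorem image_card_twist (A : Finset α) (𝓕 : Finset (Finset α)) :
    (twist A 𝓕).image card = 𝓕.image fun X => #(A ∆ X) :=
  image_image

theorem card_symmDiff_insert_eq_of_mem_iff {A F : Finset α} {a b : α} (haF : a ∉ F)
    (hbF : b ∉ F) (hA : a ∈ A ↔ b ∈ A) : #(A ∆ insert a F) = #(A ∆ insert b F) := by
  rw [← card_map (Equiv.swap a b).toEmbedding]
  congr 1
  ext x
  simp only [mem_map_equiv, mem_symmDiff, mem_insert, Equiv.symm_swap]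
  rcases eq_or_ne x a with rfl | hxa
  · simp only [Equiv.swap_apply_left, or_false, hbF, hA, haF]
    tauto
  rcases eq_or_ne x b with rfl | hxb
  · simp [Equiv.swap_apply_right, *]
  · simp [Equiv.swap_apply_of_ne_of_ne hxa hxb, *]

theorem mem_iff_mem_of_card_inter_pair {A : Finset α} {a b : α}
    (h : #(A ∩ {a, b}) = 0 ∨ #(A ∩ {a, b}) = 2) : a ∈ A ↔ b ∈ A := by
  by_cases ha : a ∈ A <;> by_cases hb : b ∈ A <;>
    simp_all [inter_insert_of_mem, inter_insert_of_notMem, inter_singleton_of_mem,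
      inter_singleton_of_notMem]

theorem exists_eq_insert_of_mem_slideSet {E : Finset α} {a b : α} {𝓕 : Finset (Finset α)}
    {X : Finset α} (hX : X ∈ slideSet E a b 𝓕) :
    ∃ F, a ∉ F ∧ b ∉ F ∧ insert b F ∈ 𝓕 ∧ X = insert a F := by
  obtain ⟨F, hF, rfl⟩ := mem_image.1 hX
  obtain ⟨hFE, hbF⟩ := mem_filter.1 hF
  have hF' := mem_powerset.1 hFE
  exact ⟨F, fun h => by simpa using hF' h, fun h => by simpa using hF' h, hbF, rfl⟩

theorem insert_notMem_slideSet {E : Finset α} {a b : α} (hab : a ≠ b) {𝓕 : Finset (Finset α)}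
    {F : Finset α} (haF : a ∉ F) : insert b F ∉ slideSet E a b 𝓕 := by
  intro h
  obtain ⟨G, -, -, -, hG⟩ := exists_eq_insert_of_mem_slideSet h
  have : a ∈ insert b F := hG ▸ mem_insert_self a G
  simp [hab, haF] at this

theorem width_twist_handleSlide_general (E : Finset α) (𝓕 : Finset (Finset α))
    (a b : α) (hab : a ≠ b)
    (A : Finset α)
    (hcard : (A ∩ {a, b}).card = 0 ∨ (A ∩ {a, b}).card = 2) :
    width (twist A 𝓕) = width (twist A (handleSlide E a b 𝓕)) := by
  have hAab := mem_iff_mem_of_card_inter_pair hcard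
  refine width_eq_of_image_card_eq ?_
  rw [image_card_twist, image_card_twist, handleSlide,
    image_symmDiff_eq_of_forall_exists]
  intro X hX
  obtain ⟨F, haF, hbF, hF, rfl⟩ := exists_eq_insert_of_mem_slideSet hX
  exact ⟨insert b F, mem_sdiff.2 ⟨hF, insert_notMem_slideSet hab haF⟩,
    card_symmDiff_insert_eq_of_mem_iff hbF haF hAab.symm⟩

/-- If `|A ∩ {a,b}|` is `0` or `2`, then twisting by `A` gives equal widths
for `D` and the handle-slid system `D̃_ab`. -/
theorem width_twist_handleSlide (E : Finset α) (𝓕 : Finset (Finset α))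
    (h𝓕 : ∀ X ∈ 𝓕, X ⊆ E) (hprop : 𝓕.Nonempty)
    (a b : α) (ha : a ∈ E) (hb : b ∈ E) (hab : a ≠ b)
    (hprop' : (handleSlide E a b 𝓕).Nonempty)
    (A : Finset α) (hA : A ⊆ E)
    (hcard : (A ∩ {a, b}).card = 0 ∨ (A ∩ {a, b}).card = 2) :
    width (twist A 𝓕) = width (twist A (handleSlide E a b 𝓕)) :=
  width_twist_handleSlide_general E 𝓕 a b hab A hcard

end SetSystem
end

section
/- The twist polynomial of binary delta-matroids does not satisfy the Tutte relation: there do not exist polynomials x, y, p, q (with integer coefficients, say) such that for every binary delta-matroid D = (E, F) and every e ∈ E one has ∂ω_D(z) = x·∂ω_{D\e}(z) if e is a loop, ∂ω_D(z) = y·∂ω_{D/e}(z) if e is a coloop, and ∂ω_D(z) = p·∂ω_{D\e}(z) + q·∂ω_{D/e}(z) otherwise. In particular, for the binary delta-matroids D = ({a,b,c}, {∅, {b,c}}) and D' = ({a,b,c}, {∅, {a,b}, {a,c}, {b,c}}), no choice of p and q satisfies both ∂ω_D(z) = p·∂ω_{D\b}(z) + q·∂ω_{D/b}(z) and ∂ω_{D'}(z)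 = p·∂ω_{D'\c}(z) + q·∂ω_{D'/c}(z). -/
open scoped symmDiff

namespace SetSystem

variable {α : Type*} [DecidableEq α]

/-! In `D = ({a,b,c}, {∅, {b,c}})` at `b`, and in `D' = ({a,b,c}, {∅, {a,b}, {a,c}, {b,c}})`
at `c`, deletion and contraction have the same twist polynomial (`4`, resp. `2z² + 2`), so a
Tutte relation only sees `p + q`. Since `∂ω_D = 4z² + 4`, it forces `p + q = z² + 1`, and then
`∂ω_{D'} = 8z²` would equal `(2z² + 2)(z² + 1)`, which fails at `z = 0`. Both set systems are
binary, as `D(C)` for the adjacency matrices over `GF(2)` of an edge and of a triangle.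
Here `a, b, c` are `0, 1, 2`. -/

open Polynomial

lemma twist_empty (𝓕 : Finset (Finset α)) : twist ∅ 𝓕 = 𝓕 := by
  simp [twist, ← Finset.bot_eq_empty]

lemma twistPoly_eq_of_widths {E : Finset α} {𝓕 : Finset (Finset α)} {m : Multiset ℕ}
    (h : E.powerset.val.map (fun A => width (twist A 𝓕)) = m) :
    twistPoly E 𝓕 = (m.map (X ^ ·)).sum := by
  rw [twistPoly, Finset.sum_eq_multiset_sum, ← h, Multiset.map_map]
  rfl

def pairMatrix (S : Finset (Finset α)) (i j : α) : ZMod 2 :=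
  if {i, j} ∈ S then 1 else 0

lemma pairMatrix_symm (S : Finset (Finset α)) (i j : α) :
    pairMatrix S i j = pairMatrix S j i := by
  rw [pairMatrix, pairMatrix, Finset.pair_comm]

lemma isBinary_of_eq_filter_det {E : Finset α} {𝓕 : Finset (Finset α)} {C : α → α → ZMod 2}
    (hC : ∀ i j, C i j = C j i)
    (h : 𝓕 = E.powerset.filter fun B : Finset α => (Matrix.of fun i j : ↥B => C i.1 j.1).det ≠ 0) :
    IsBinary E 𝓕 :=
  ⟨∅, Finset.empty_subset E, C, hC, fun B => by simp [twist_empty, h]⟩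

lemma mul_eq_mul_of_eq_mul_add_mul {R : Type*} [CommRing R] {A B a b p q : R}
    (hA : A = p * a + q * a) (hB : B = p * b + q * b) : A * b = B * a := by
  rw [hA, hB]; ring

lemma twistPoly_edge : twistPoly ({0, 1, 2} : Finset ℕ) {∅, {1, 2}} = 4 * X ^ 2 + 4 := by
  rw [twistPoly_eq_of_widths (m := {2, 2, 0, 0, 0, 0, 2, 2}) (by decide)]
  simp only [Multiset.insert_eq_cons, Multiset.map_cons, Multiset.map_singleton,
    Multiset.sum_cons, Multiset.sum_singleton]
  ring

lemma twistPoly_edge_delete : twistPoly (({0, 1, 2} : Finset ℕ).erase 1)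
    (deleteElem {∅, {1, 2}} 1) = 4 := by
  rw [twistPoly_eq_of_widths (m := {0, 0, 0, 0}) (by decide)]
  simp only [Multiset.insert_eq_cons, Multiset.map_cons, Multiset.map_singleton,
    Multiset.sum_cons, Multiset.sum_singleton]
  ring

lemma twistPoly_edge_contract : twistPoly (({0, 1, 2} : Finset ℕ).erase 1)
    (contractElem {∅, {1, 2}} 1) = 4 := by
  rw [twistPoly_eq_of_widths (m := {0, 0, 0, 0}) (by decide)]
  simp only [Multiset.insert_eq_cons, Multiset.map_cons, Multiset.map_singleton,
    Multiset.sum_cons, Multiset.sum_singleton]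
  ring

lemma twistPoly_triangle :
    twistPoly ({0, 1, 2} : Finset ℕ) {∅, {0, 1}, {0, 2}, {1, 2}} = 8 * X ^ 2 := by
  rw [twistPoly_eq_of_widths (m := {2, 2, 2, 2, 2, 2, 2, 2}) (by decide)]
  simp only [Multiset.insert_eq_cons, Multiset.map_cons, Multiset.map_singleton,
    Multiset.sum_cons, Multiset.sum_singleton]
  ring

lemma twistPoly_triangle_delete : twistPoly (({0, 1, 2} : Finset ℕ).erase 2)
    (deleteElem {∅, {0, 1}, {0, 2}, {1, 2}} 2) = 2 * X ^ 2 + 2 := by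
  rw [twistPoly_eq_of_widths (m := {2, 0, 0, 2}) (by decide)]
  simp only [Multiset.insert_eq_cons, Multiset.map_cons, Multiset.map_singleton,
    Multiset.sum_cons, Multiset.sum_singleton]
  ring

lemma twistPoly_triangle_contract : twistPoly (({0, 1, 2} : Finset ℕ).erase 2)
    (contractElem {∅, {0, 1}, {0, 2}, {1, 2}} 2) = 2 * X ^ 2 + 2 := by
  rw [twistPoly_eq_of_widths (m := {0, 2, 2, 0}) (by decide)]
  simp only [Multiset.insert_eq_cons, Multiset.map_cons, Multiset.map_singleton,
    Multiset.sum_cons, Multiset.sum_singleton]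
  ring

lemma isBinary_edge : IsBinary ({0, 1, 2} : Finset ℕ) {∅, {1, 2}} :=
  isBinary_of_eq_filter_det (pairMatrix_symm {{1, 2}}) (by decide)

lemma isBinary_triangle : IsBinary ({0, 1, 2} : Finset ℕ) {∅, {0, 1}, {0, 2}, {1, 2}} :=
  isBinary_of_eq_filter_det (pairMatrix_symm {{0, 1}, {0, 2}, {1, 2}}) (by decide)

lemma isDeltaMatroid_edge : IsDeltaMatroid ({∅, {1, 2}} : Finset (Finset ℕ)) :=
  ⟨by decide, by decide⟩

lemma isDeltaMatroid_triangle :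
    IsDeltaMatroid ({∅, {0, 1}, {0, 2}, {1, 2}} : Finset (Finset ℕ)) :=
  ⟨by decide, by decide⟩

lemma no_tutte_coefficients_edge_triangle : ∀ p q : Polynomial ℤ,
      ¬ (twistPoly ({0, 1, 2} : Finset ℕ) ({∅, {1, 2}} : Finset (Finset ℕ))
            = p * twistPoly (({0, 1, 2} : Finset ℕ).erase 1)
                (deleteElem ({∅, {1, 2}} : Finset (Finset ℕ)) 1)
              + q * twistPoly (({0, 1, 2} : Finset ℕ).erase 1)
                (contractElem ({∅, {1, 2}} : Finset (Finset ℕ)) 1) ∧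
          twistPoly ({0, 1, 2} : Finset ℕ) ({∅, {0, 1}, {0, 2}, {1, 2}} : Finset (Finset ℕ))
            = p * twistPoly (({0, 1, 2} : Finset ℕ).erase 2)
                (deleteElem ({∅, {0, 1}, {0, 2}, {1, 2}} : Finset (Finset ℕ)) 2)
              + q * twistPoly (({0, 1, 2} : Finset ℕ).erase 2)
                (contractElem ({∅, {0, 1}, {0, 2}, {1, 2}} : Finset (Finset ℕ)) 2)) := by
  rintro p q ⟨hD, hD'⟩
  rw [twistPoly_edge, twistPoly_edge_delete, twistPoly_edge_contract] at hD
  rw [twistPoly_triangle, twistPoly_triangle_delete, twistPoly_triangle_contract] at hD'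
  have hcross := congrArg (eval 0) (mul_eq_mul_of_eq_mul_add_mul hD hD')
  norm_num at hcross

/-- The twist polynomial of binary delta-matroids does not satisfy the Tutte
relation; in particular no `p, q` work simultaneously for `D = ({a,b,c}, {∅,{b,c}})` at `b`
and `D' = ({a,b,c}, {∅,{a,b},{a,c},{b,c}})` at `c` (here realized over `ℕ` with
`a = 0`, `b = 1`, `c = 2`). -/
theorem twistPoly_not_Tutte :
    (¬ ∃ x y p q : Polynomial ℤ,
      ∀ (E : Finset ℕ) (𝓕 : Finset (Finset ℕ)), (∀ X ∈ 𝓕, X ⊆ E) →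
        IsDeltaMatroid 𝓕 → IsBinary E 𝓕 → ∀ e ∈ E,
          (IsLoop 𝓕 e →
            twistPoly E 𝓕 = x * twistPoly (E.erase e) (deleteElem 𝓕 e)) ∧
          (IsColoop 𝓕 e →
            twistPoly E 𝓕 = y * twistPoly (E.erase e) (contractElem 𝓕 e)) ∧
          (¬ IsLoop 𝓕 e → ¬ IsColoop 𝓕 e →
            twistPoly E 𝓕 = p * twistPoly (E.erase e) (deleteElem 𝓕 e)
              + q * twistPoly (E.erase e) (contractElem 𝓕 e))) ∧
    (∀ p q : Polynomial ℤ,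
      ¬ (twistPoly ({0, 1, 2} : Finset ℕ) ({∅, {1, 2}} : Finset (Finset ℕ))
            = p * twistPoly (({0, 1, 2} : Finset ℕ).erase 1)
                (deleteElem ({∅, {1, 2}} : Finset (Finset ℕ)) 1)
              + q * twistPoly (({0, 1, 2} : Finset ℕ).erase 1)
                (contractElem ({∅, {1, 2}} : Finset (Finset ℕ)) 1) ∧
          twistPoly ({0, 1, 2} : Finset ℕ) ({∅, {0, 1}, {0, 2}, {1, 2}} : Finset (Finset ℕ))
            = p * twistPoly (({0, 1, 2} : Finset ℕ).erase 2)
                (deleteElem ({∅, {0, 1}, {0, 2}, {1, 2}} : Finset (Finset ℕ)) 2)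
              + q * twistPoly (({0, 1, 2} : Finset ℕ).erase 2)
                (contractElem ({∅, {0, 1}, {0, 2}, {1, 2}} : Finset (Finset ℕ)) 2))) := by
  refine ⟨?_, no_tutte_coefficients_edge_triangle⟩
  rintro ⟨x, y, p, q, hTutte⟩
  have hD := (hTutte {0, 1, 2} {∅, {1, 2}} (by decide) isDeltaMatroid_edge isBinary_edge
    1 (by decide)).2.2 (by simp [IsLoop]) (by simp [IsColoop])
  have hD' := (hTutte {0, 1, 2} {∅, {0, 1}, {0, 2}, {1, 2}} (by decide)
    isDeltaMatroid_triangle isBinary_triangle 2 (by decide)).2.2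
    (by simp [IsLoop]) (by simp [IsColoop])
  exact no_tutte_coefficients_edge_triangle p q ⟨hD, hD'⟩

end SetSystem
end
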